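/- Let f : M → ℝ^(n+1) and ξ : M → ℝ^(n+1) be smooth maps on a smooth manifold M, with F₀ = (f, 1) and Φ₀ = (ξ, 0) : M → ℝ^(n+2). Let λ, μ : M → ℝ be smooth with λ nowhere zero, and set F = λ F₀, Φ = Φ₀ + μ F₀. If for every x ∈ M and every tangent vector X at x, the derivative D_X ξ lies in the image of the differential of f at x, then for every x and X, the derivative D_X Φ lies in the span of F(x) and the image of the differential of F at x. -/

import Mathlib

/-!
Write `F₀ = (f, 1)`. Since `DF = Dλ · F₀ + λ · (Df, 0)` and `λ ≠ 0`, the space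
`span{F} + F_*(TM)` contains `F₀` and every `(D_Y f, 0)`. Now
`DΦ = (Dξ, 0) + μ · (Df, 0) + Dμ · F₀`, and `(D_X ξ, 0) = (D_Y f, 0)` for some `Y`
by the eqüiaffine hypothesis.
-/

open Set Submodule

section

variable {𝕜 : Type*} [NontriviallyNormedField 𝕜]
  {M : Type*} [NormedAddCommGroup M] [NormedSpace 𝕜 M]
  {E : Type*} [NormedAddCommGroup E] [NormedSpace 𝕜 E]

theorem hasFDerivAt_smul_prodMk_one {f : M → E} {c : M → 𝕜} {x : M}
    (hf : DifferentiableAt 𝕜 f x) (hc : DifferentiableAt 𝕜 c x) :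
    HasFDerivAt (fun y => c y • (f y, (1 : 𝕜)))
      (c x • (fderiv 𝕜 f x).prod 0 + (fderiv 𝕜 c x).smulRight (f x, 1)) x :=
  hc.hasFDerivAt.smul (hf.hasFDerivAt.prodMk (hasFDerivAt_const 1 x))

theorem span_prodMk_one_le_span_smul {f : M → E} {c : M → 𝕜} {x : M}
    (hf : DifferentiableAt 𝕜 f x) (hc : DifferentiableAt 𝕜 c x) (hc0 : c x ≠ 0) :
    span 𝕜 ({(f x, 1)} ∪ range ((fderiv 𝕜 f x).prod 0)) ≤
      span 𝕜 ({c x • (f x, (1 : 𝕜))} ∪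
        range (fderiv 𝕜 (fun y => c y • (f y, (1 : 𝕜))) x)) := by
  set S := span 𝕜 ({c x • (f x, (1 : 𝕜))} ∪
    range (fderiv 𝕜 (fun y => c y • (f y, (1 : 𝕜))) x))
  have hpos : (f x, (1 : 𝕜)) ∈ S :=
    (smul_mem_iff S hc0).mp (subset_span (Or.inl rfl))
  rw [span_le, union_subset_iff, singleton_subset_iff]
  refine ⟨hpos, ?_⟩
  rintro _ ⟨Y, rfl⟩
  have hDF : fderiv 𝕜 (fun y => c y • (f y, (1 : 𝕜))) x Y ∈ S :=
    subset_span (Or.inr ⟨Y, rfl⟩)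
  rw [(hasFDerivAt_smul_prodMk_one hf hc).fderiv] at hDF
  have hsplit : c x • (fderiv 𝕜 f x).prod 0 Y =
      (c x • (fderiv 𝕜 f x).prod 0 + (fderiv 𝕜 c x).smulRight (f x, (1 : 𝕜)) :
        M →L[𝕜] E × 𝕜) Y - fderiv 𝕜 c x Y • (f x, (1 : 𝕜)) := by
    simp
  refine (smul_mem_iff S hc0).mp ?_
  rw [hsplit]
  exact S.sub_mem hDF (S.smul_mem _ hpos)

theorem fderiv_prodMk_zero_add_smul_mem_span {f ξ : M → E} {c : M → 𝕜} {x X : M}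
    (hf : DifferentiableAt 𝕜 f x) (hξ : DifferentiableAt 𝕜 ξ x)
    (hc : DifferentiableAt 𝕜 c x) (heq : fderiv 𝕜 ξ x X ∈ range (fderiv 𝕜 f x)) :
    fderiv 𝕜 (fun y => (ξ y, (0 : 𝕜)) + c y • (f y, (1 : 𝕜))) x X ∈
      span 𝕜 ({(f x, 1)} ∪ range ((fderiv 𝕜 f x).prod 0)) := by
  set T := span 𝕜 ({(f x, (1 : 𝕜))} ∪ range ((fderiv 𝕜 f x).prod 0))
  have hpos : (f x, (1 : 𝕜)) ∈ T := subset_span (Or.inl rfl)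
  have htan (Y : M) : (fderiv 𝕜 f x).prod 0 Y ∈ T := subset_span (Or.inr ⟨Y, rfl⟩)
  obtain ⟨Y, hY⟩ := heq
  have hξY : (fderiv 𝕜 ξ x).prod (0 : M →L[𝕜] 𝕜) X = (fderiv 𝕜 f x).prod 0 Y := by simp [hY]
  rw [((hξ.hasFDerivAt.prodMk (hasFDerivAt_const (0 : 𝕜) x)).fun_add
    (hasFDerivAt_smul_prodMk_one hf hc)).fderiv]
  simp only [add_apply, smul_apply, ContinuousLinearMap.smulRight_apply, hξY]
  exact T.add_mem (htan Y) (T.add_mem (T.smul_mem _ (htan X)) (T.smul_mem _ hpos))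

end

/-- Lemma 3.2: any lifting F = λ(f,1), Φ = (ξ,0) + μ(f,1) of an
eqüiaffine pair (f,ξ) is eqüiaffine: D_XΦ lies in span{F(x)} + F_*(T_xM). -/
theorem stmt_3 {n : ℕ} {M : Type*} [NormedAddCommGroup M] [NormedSpace ℝ M]
    (f ξ : M → (Fin (n + 1) → ℝ)) (lam mu : M → ℝ)
    (hf : Differentiable ℝ f) (hξ : Differentiable ℝ ξ)
    (hlam : Differentiable ℝ lam) (hmu : Differentiable ℝ mu)
    (hlam0 : ∀ x, lam x ≠ 0)
    (F₀ : M → (Fin (n + 1) → ℝ) × ℝ) (hF₀ : F₀ = fun x => (f x, 1))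
    (Φ₀ : M → (Fin (n + 1) → ℝ) × ℝ) (hΦ₀ : Φ₀ = fun x => (ξ x, 0))
    (F : M → (Fin (n + 1) → ℝ) × ℝ) (hF : F = fun x => lam x • F₀ x)
    (Φ : M → (Fin (n + 1) → ℝ) × ℝ) (hΦ : Φ = fun x => Φ₀ x + mu x • F₀ x)
    (heq : ∀ (x : M) (X : M), fderiv ℝ ξ x X ∈ Set.range (fderiv ℝ f x)) :
    ∀ (x : M) (X : M),
      fderiv ℝ Φ x X ∈ Submodule.span ℝ ({F x} ∪ Set.range (fderiv ℝ F x)) := by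
  subst hF₀ hΦ₀ hF hΦ
  intro x X
  exact span_prodMk_one_le_span_smul (hf x) (hlam x) (hlam0 x)
    (fderiv_prodMk_zero_add_smul_mem_span (hf x) (hξ x) (hmu x) (heq x X))
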